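/- Let {T(v)} be a tree representation of a finite simple graph G in which every subtree T(v) is a downward path in the host tree. Then for any two vertices v,w with d(𝐯) ≤ d(𝐰), the subtree T(v) overshadows T(w); in particular, the tree representation is compatible. -/

import Mathlib

/-- A host tree: a finite tree (connected acyclic simple graph on a nonempty
finite node set) with a distinguished root and positive real edge weights. -/
structure HostTree where
  V : Type
  [fintypeV : Fintype V]
  [nonemptyV : Nonempty V]
  G : SimpleGraph V
  isTree : G.IsTree
  root : V
  w : V → V → ℝ
  w_symm : ∀ x y : V, w x y = w y x
  w_pos : ∀ x y : V, G.Adj x y → 0 < w x y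

attribute [instance] HostTree.fintypeV HostTree.nonemptyV

/-- The unique path in the host tree from the root to a node. -/
noncomputable def HostTree.rootPath (T : HostTree) (x : T.V) : T.G.Walk T.root x :=
  (T.isTree.existsUnique_path T.root x).choose

/-- The depth of a node: the sum of the weights of the edges on the unique
path from the root to the node. -/
noncomputable def HostTree.depth (T : HostTree) (x : T.V) : ℝ :=
  ((T.rootPath x).darts.map (fun d => T.w d.toProd.1 d.toProd.2)).sum

/-- A subtree of the host tree: a nonempty set of nodes inducing a connected
subgraph. -/
def HostTree.IsSubtree (T : HostTree) (S : Set T.V) : Prop :=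
  S.Nonempty ∧ (T.G.induce S).Connected

/-- `S₁` overshadows `S₂`: every node of `S₂ \ S₁` has strictly greater depth
than every node of `S₂ ∩ S₁`. -/
def HostTree.Overshadows (T : HostTree) (S₁ S₂ : Set T.V) : Prop :=
  ∀ x ∈ S₂ \ S₁, ∀ y ∈ S₂ ∩ S₁, T.depth y < T.depth x

/-- Two subtrees are compatible if one overshadows the other. -/
def HostTree.CompatiblePair (T : HostTree) (S₁ S₂ : Set T.V) : Prop :=
  T.Overshadows S₁ S₂ ∨ T.Overshadows S₂ S₁

/-- `x` is the root of the subtree `S`: a node of `S` of minimum depth. -/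
def HostTree.IsSubtreeRoot (T : HostTree) (S : Set T.V) (x : T.V) : Prop :=
  x ∈ S ∧ ∀ y ∈ S, T.depth x ≤ T.depth y

/-- The closed neighbourhood `N[v]` of a vertex. -/
def closedNbhd {α : Type*} (G : SimpleGraph α) (v : α) : Set α :=
  insert v (G.neighborSet v)

/-- A tree representation of `G`: a subtree `t v` of the host tree for every
vertex `v`, such that distinct vertices are adjacent iff their subtrees meet. -/
def IsTreeRep {α : Type*} (G : SimpleGraph α) (T : HostTree) (t : α → Set T.V) : Prop :=
  (∀ v : α, T.IsSubtree (t v)) ∧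
  ∀ u v : α, u ≠ v → (G.Adj u v ↔ (t u ∩ t v).Nonempty)

/-- A compatible tree representation: a tree representation all of whose
subtrees are pairwise compatible. -/
def IsCompatibleTreeRep {α : Type*} (G : SimpleGraph α) (T : HostTree)
    (t : α → Set T.V) : Prop :=
  IsTreeRep G T t ∧ ∀ u v : α, T.CompatiblePair (t u) (t v)

/-- A strong elimination order. -/
def IsStrongElimOrder {α : Type*} (G : SimpleGraph α) {n : ℕ} (σ : Fin n ≃ α) : Prop :=
  ∀ i j k l : Fin n, i < j → k < l →
    σ k ∈ closedNbhd G (σ i) → σ l ∈ closedNbhd G (σ i) →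
    σ k ∈ closedNbhd G (σ j) → σ l ∈ closedNbhd G (σ j)

/-- A downward path in the host tree: a subtree any two of whose nodes are
comparable (one lies on the unique root-path of the other). -/
def HostTree.IsDownwardPath (T : HostTree) (S : Set T.V) : Prop :=
  T.IsSubtree S ∧
  ∀ x ∈ S, ∀ y ∈ S, x ∈ (T.rootPath y).support ∨ y ∈ (T.rootPath x).support

/-! In a downward path `S` with root `r`, every node `y ∈ S` has `r` as an ancestor and
the whole segment from `r` down to `y` lies in `S`. Let `x ∈ T(w) \ T(v)` and `y ∈ T(w) ∩ T(v)`;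
they are comparable. If `x` were an ancestor of `y`, it would be either a proper ancestor of the
root `𝐯`, hence shallower than `𝐯` and so than `𝐰` — impossible for `x ∈ T(w)` — or on the segment
from `𝐯` to `y`, hence in `T(v)`. So `y` is a proper ancestor of `x`, and positive weights make it
strictly shallower. -/

namespace HostTree

variable (T : HostTree)

noncomputable def weight {a b : T.V} (p : T.G.Walk a b) : ℝ :=
  (p.darts.map fun d => T.w d.toProd.1 d.toProd.2).sum

variable {T}

lemma depth_eq_weight (x : T.V) : T.depth x = T.weight (T.rootPath x) := rfl

lemma weight_append {a b c : T.V} (p : T.G.Walk a b) (q : T.G.Walk b c) :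
    T.weight (p.append q) = T.weight p + T.weight q := by
  simp only [weight, SimpleGraph.Walk.darts_append, List.map_append, List.sum_append]

lemma weight_pos {a b : T.V} (p : T.G.Walk a b) (hab : a ≠ b) : 0 < T.weight p := by
  refine List.sum_pos _ (fun r hr => ?_) (fun hnil => hab ?_)
  · obtain ⟨d, -, rfl⟩ := List.mem_map.mp hr
    exact T.w_pos _ _ d.adj
  · refine SimpleGraph.Walk.eq_of_length_eq_zero (p := p) ?_
    rw [← p.length_darts, List.map_eq_nil_iff.mp hnil, List.length_nil]

lemma rootPath_isPath (x : T.V) : (T.rootPath x).IsPath :=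
  (T.isTree.existsUnique_path T.root x).choose_spec.1

lemma eq_of_isPath {a b : T.V} {p q : T.G.Walk a b} (hp : p.IsPath) (hq : q.IsPath) : p = q :=
  (T.isTree.existsUnique_path a b).unique hp hq

section Ancestors

variable [DecidableEq T.V] {x y : T.V}

lemma rootPath_takeUntil (hx : x ∈ (T.rootPath y).support) :
    (T.rootPath y).takeUntil x hx = T.rootPath x :=
  eq_of_isPath ((rootPath_isPath y).takeUntil hx) (rootPath_isPath x)

lemma rootPath_append_dropUntil (hx : x ∈ (T.rootPath y).support) :
    (T.rootPath x).append ((T.rootPath y).dropUntil x hx) = T.rootPath y := by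
  rw [← rootPath_takeUntil hx, SimpleGraph.Walk.take_spec]

lemma mem_rootPath_or_mem_dropUntil (hx : x ∈ (T.rootPath y).support) {z : T.V}
    (hz : z ∈ (T.rootPath y).support) :
    z ∈ (T.rootPath x).support ∨ z ∈ ((T.rootPath y).dropUntil x hx).support := by
  rw [← SimpleGraph.Walk.mem_support_append_iff, rootPath_append_dropUntil hx]
  exact hz

end Ancestors

lemma depth_lt_of_mem_rootPath {x y : T.V} (hx : x ∈ (T.rootPath y).support) (hxy : x ≠ y) :
    T.depth x < T.depth y := by
  classical
  have hsplit := congrArg T.weight (rootPath_append_dropUntil hx)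
  rw [weight_append] at hsplit
  have := weight_pos ((T.rootPath y).dropUntil x hx) hxy
  rw [depth_eq_weight, depth_eq_weight, ← hsplit]
  linarith

lemma IsSubtree.support_subset {S : Set T.V} (hS : T.IsSubtree S) {a b : T.V} (ha : a ∈ S)
    (hb : b ∈ S) {p : T.G.Walk a b} (hp : p.IsPath) : {z | z ∈ p.support} ⊆ S := by
  classical
  obtain ⟨q⟩ := hS.2 ⟨a, ha⟩ ⟨b, hb⟩
  let q' := q.map (SimpleGraph.Embedding.induce S).toHom
  obtain rfl : p = q'.bypass := eq_of_isPath hp q'.bypass_isPath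
  intro z hz
  obtain ⟨⟨z, hzS⟩, -, rfl⟩ :=
    List.mem_map.mp ((q.support_map _) ▸ q'.support_bypass_subset_support hz)
  exact hzS

lemma IsDownwardPath.mem_rootPath_of_isSubtreeRoot {S : Set T.V} (hS : T.IsDownwardPath S)
    {r : T.V} (hr : T.IsSubtreeRoot S r) {y : T.V} (hy : y ∈ S) : r ∈ (T.rootPath y).support := by
  rcases hS.2 r hr.1 y hy with hry | hyr
  · exact hry
  · by_cases hyr' : y = r
    · exact hyr' ▸ SimpleGraph.Walk.end_mem_support _
    · exact absurd (hr.2 y hy) (not_le.mpr (depth_lt_of_mem_rootPath hyr hyr'))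

lemma IsDownwardPath.mem_of_mem_rootPath {S : Set T.V} (hS : T.IsDownwardPath S) {r : T.V}
    (hr : T.IsSubtreeRoot S r) {x y : T.V} (hy : y ∈ S) (hxy : x ∈ (T.rootPath y).support)
    (hrx : T.depth r ≤ T.depth x) : x ∈ S := by
  classical
  have hry := hS.mem_rootPath_of_isSubtreeRoot hr hy
  rcases mem_rootPath_or_mem_dropUntil hry hxy with hxr | hxr
  · by_cases hx : x = r
    · exact hx ▸ hr.1
    · exact absurd hrx (not_le.mpr (depth_lt_of_mem_rootPath hxr hx))
  · exact hS.1.support_subset hr.1 hy ((rootPath_isPath y).dropUntil hry) hxr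

theorem overshadows_of_isDownwardPath {S₁ S₂ : Set T.V} (h₁ : T.IsDownwardPath S₁)
    (h₂ : T.IsDownwardPath S₂) {r₁ r₂ : T.V} (hr₁ : T.IsSubtreeRoot S₁ r₁)
    (hr₂ : T.IsSubtreeRoot S₂ r₂) (hle : T.depth r₁ ≤ T.depth r₂) : T.Overshadows S₁ S₂ := by
  rintro x ⟨hx₂, hx₁⟩ y ⟨hy₂, hy₁⟩
  have hxy : x ≠ y := fun h => hx₁ (h ▸ hy₁)
  rcases h₂.2 y hy₂ x hx₂ with hyx | hxy'
  · exact depth_lt_of_mem_rootPath hyx hxy.symm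
  · exact absurd (h₁.mem_of_mem_rootPath hr₁ hy₁ hxy' (hle.trans (hr₂.2 x hx₂))) hx₁

end HostTree

theorem rdv_overshadows_general {α : Type}
    (T : HostTree) (t : α → Set T.V)
    (hdp : ∀ v : α, T.IsDownwardPath (t v))
    (rt : α → T.V) (hrt : ∀ v : α, T.IsSubtreeRoot (t v) (rt v)) :
    (∀ v w : α, T.depth (rt v) ≤ T.depth (rt w) → T.Overshadows (t v) (t w)) ∧
    (∀ u v : α, T.CompatiblePair (t u) (t v)) := by
  have key : ∀ v w : α, T.depth (rt v) ≤ T.depth (rt w) → T.Overshadows (t v) (t w) :=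
    fun v w => HostTree.overshadows_of_isDownwardPath (hdp v) (hdp w) (hrt v) (hrt w)
  refine ⟨key, fun u v => ?_⟩
  rcases le_total (T.depth (rt u)) (T.depth (rt v)) with huv | hvu
  · exact Or.inl (key u v huv)
  · exact Or.inr (key v u hvu)

/-- In a tree representation by downward paths, if `d(𝐯) ≤ d(𝐰)` then `T(v)`
overshadows `T(w)`; in particular the representation is compatible. -/
theorem rdv_overshadows {α : Type} [Fintype α]
    (G : SimpleGraph α) (T : HostTree) (t : α → Set T.V) (h : IsTreeRep G T t)
    (hdp : ∀ v : α, T.IsDownwardPath (t v))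
    (rt : α → T.V) (hrt : ∀ v : α, T.IsSubtreeRoot (t v) (rt v)) :
    (∀ v w : α, T.depth (rt v) ≤ T.depth (rt w) → T.Overshadows (t v) (t w)) ∧
    (∀ u v : α, T.CompatiblePair (t u) (t v)) :=
  rdv_overshadows_general T t hdp rt hrt
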